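/- For j ≠ k in {0,1,2}, the operators satisfy [H_j, L_k] = L_k, [H_j, Λ_k] = −Λ_k, [H_j, V_j] = 0, [H_j, A_j] = 0, [H_j, V_k] = 2V_k, and [H_j, A_k] = −2A_k. -/

import Mathlib

/-- Index set for the orthonormal basis `v_{ij}`, `i ∈ {1,2}`, `j ∈ {0,1,2}`:
`(0, j)` stands for `v_{1j}` and `(1, j)` for `v_{2j}`. -/
abbrev Idx := Fin 2 × Fin 3

/-- A linear order key on the index set. -/
def key (a : Idx) : ℕ := a.1.val * 3 + a.2.val

noncomputable section

/-- Concrete model of the exterior algebra `Λ*W` of a 6-dimensional real inner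
product space `W` with orthonormal basis `v_{ij}`: functions on subsets of the
index set, with the `ℓ²` (Euclidean) inner product, so that the wedge monomials
in the `v_{ij}` form an orthonormal basis. -/
abbrev EW := EuclideanSpace ℝ (Finset Idx)

/-- The sign `(-1)^{#{b ∈ S | b < a}}`. -/
def sgn (a : Idx) (S : Finset Idx) : ℝ :=
  (-1 : ℝ) ^ (S.filter (fun b => key b < key a)).card

/-- `Eop a` is the wedge (exterior multiplication) operator with `v_a` on `Λ*W`. -/
def Eop (a : Idx) : Module.End ℝ EW where
  toFun f := WithLp.toLp 2 (fun (S : Finset Idx) => if a ∈ S then sgn a (S.erase a) * f (S.erase a) else 0)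
  map_add' f g := by
    ext S
    by_cases h : a ∈ S <;> simp [h, mul_add]
  map_smul' c f := by
    ext S
    by_cases h : a ∈ S <;> simp [h] <;> ring

/-- `Iop a` is the contraction (interior multiplication) operator with the vector
dual to `v_a` on `Λ*W`. -/
def Iop (a : Idx) : Module.End ℝ EW where
  toFun f := WithLp.toLp 2 (fun (S : Finset Idx) => if a ∈ S then 0 else sgn a S * f (insert a S))
  map_add' f g := by
    ext S
    by_cases h : a ∈ S <;> simp [h, mul_add]
  map_smul' c f := by
    ext S
    by_cases h : a ∈ S <;> simp [h] <;> ring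

/-- `L_0, L_1, L_2`: wedge with `ω_D = v_{11}∧v_{12} + v_{21}∧v_{22}`,
`-ω_2 = -(v_{10}∧v_{12} + v_{20}∧v_{22})`, `ω_1 = v_{10}∧v_{11} + v_{20}∧v_{21}`. -/
def Lop : Fin 3 → Module.End ℝ EW
  | 0 => Eop (0, 1) ∘ₗ Eop (0, 2) + Eop (1, 1) ∘ₗ Eop (1, 2)
  | 1 => -(Eop (0, 0) ∘ₗ Eop (0, 2) + Eop (1, 0) ∘ₗ Eop (1, 2))
  | 2 => Eop (0, 0) ∘ₗ Eop (0, 1) + Eop (1, 0) ∘ₗ Eop (1, 1)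

/-- `V_j`: wedge with the volume form `v_{1j} ∧ v_{2j}`. -/
def Vop (j : Fin 3) : Module.End ℝ EW := Eop (0, j) ∘ₗ Eop (1, j)

/-- `J = Σ_j (E_{2j}I_{1j} - E_{1j}I_{2j})`, the derivation of `Λ*W` with
`J(v_{1j}) = v_{2j}` and `J(v_{2j}) = -v_{1j}`. -/
def Jop : Module.End ℝ EW :=
  ∑ j : Fin 3, (Eop (1, j) ∘ₗ Iop (0, j) - Eop (0, j) ∘ₗ Iop (1, j))

/-- `Λ_j = L_j*`, adjoint with respect to the induced inner product. -/
def Λop (j : Fin 3) : Module.End ℝ EW := LinearMap.adjoint (Lop j)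

/-- `A_j = V_j*`, adjoint with respect to the induced inner product. -/
def Aop (j : Fin 3) : Module.End ℝ EW := LinearMap.adjoint (Vop j)

/-- `H_j = [L_j, Λ_j]`. -/
def Hop (j : Fin 3) : Module.End ℝ EW := ⁅Lop j, Λop j⁆

/-!
`Eop a` and `Iop a` act as fermionic creation and annihilation operators on the monomial basis:
they satisfy the canonical anticommutation relations, and `Eop a * Iop a = Nop a` is the number
operator of `v_a`. Since `L_j = ±Ωop p q` for `{p, q} = {0,1,2} \ {j}`, these relations give
`H_j = Ncol p + Ncol q - 2`, so `ad H_j` has weight `1` on `Eop (i, r)` for `r ≠ j` and weight `0`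
for `r = j`. Weights add over products, which gives the brackets with `L_k` and `V_k`; as `H_j` is
self-adjoint, passing to adjoints negates weights, which gives those with `Λ_k` and `A_k`.
-/

section

attribute [local instance] LieRing.ofAssociativeRing

section AdEigenvector

variable {R A : Type*} [CommRing R] [Ring A] [Algebra R A]

theorem lie_mul_eq_smul_of_lie_eq_smul {H X Y : A} {c d : R} (hX : ⁅H, X⁆ = c • X)
    (hY : ⁅H, Y⁆ = d • Y) : ⁅H, X * Y⁆ = (c + d) • (X * Y) := by
  have leibniz : ⁅H, X * Y⁆ = ⁅H, X⁆ * Y + X * ⁅H, Y⁆ := by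
    simp only [Ring.lie_def]
    noncomm_ring
  rw [leibniz, hX, hY, smul_mul_assoc, mul_smul_comm, add_smul]

theorem lie_star_eq_neg_smul_of_lie_eq_smul [StarRing R] [StarRing A] [StarModule R A]
    {H X : A} {c : R} (hH : IsSelfAdjoint H) (h : ⁅H, X⁆ = c • X) :
    ⁅H, star X⁆ = -(star c • star X) := by
  have star_lie : star ⁅H, X⁆ = -⁅H, star X⁆ := by
    rw [Ring.lie_def, Ring.lie_def, star_sub, star_mul, star_mul, hH.star_eq, neg_sub]
  rw [← star_smul, ← h, star_lie, neg_neg]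

end AdEigenvector

def Nop (a : Idx) : Module.End ℝ EW where
  toFun f := WithLp.toLp 2 (fun (S : Finset Idx) => if a ∈ S then f S else 0)
  map_add' f g := by ext S; by_cases h : a ∈ S <;> simp [h]
  map_smul' c f := by ext S; by_cases h : a ∈ S <;> simp [h]

section CanonicalAnticommutation

variable (a : Idx) (f : EW) (S : Finset Idx)

theorem Eop_apply : Eop a f S = if a ∈ S then sgn a (S.erase a) * f (S.erase a) else 0 := rfl

theorem Iop_apply : Iop a f S = if a ∈ S then 0 else sgn a S * f (insert a S) := rfl

theorem Nop_apply : Nop a f S = if a ∈ S then f S else 0 := rfl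

theorem sgn_mul_self : sgn a S * sgn a S = 1 := by
  rw [sgn, ← pow_add]
  exact Even.neg_one_pow ⟨_, rfl⟩

theorem Eop_mul_Iop_self : Eop a * Iop a = Nop a := by
  ext f S
  simp only [Module.End.mul_apply, Eop_apply, Iop_apply, Nop_apply]
  by_cases h : a ∈ S
  · simp only [if_pos h, if_neg (Finset.notMem_erase a S), Finset.insert_erase h, ← mul_assoc,
      sgn_mul_self, one_mul]
  · simp [h]

theorem Iop_mul_Eop_self : Iop a * Eop a = 1 - Nop a := by
  ext f S
  simp only [Module.End.mul_apply, Eop_apply, Iop_apply, LinearMap.sub_apply, Nop_apply,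
    Module.End.one_apply, PiLp.sub_apply]
  by_cases h : a ∈ S
  · simp [h]
  · simp only [if_neg h, if_pos (Finset.mem_insert_self a S), Finset.erase_insert h, ← mul_assoc,
      sgn_mul_self, one_mul, sub_zero]

theorem Nop_mul_Eop_self : Nop a * Eop a = Eop a := by
  ext f S
  simp only [Module.End.mul_apply, Eop_apply, Nop_apply]
  by_cases h : a ∈ S <;> simp [h]

theorem Eop_mul_Nop_self : Eop a * Nop a = 0 := by
  ext f S
  simp only [Module.End.mul_apply, Eop_apply, Nop_apply, LinearMap.zero_apply]
  by_cases h : a ∈ S <;> simp [h]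

variable {a} {b : Idx}

theorem commute_Nop_Eop (h : a ≠ b) : Commute (Nop a) (Eop b) := by
  ext f S
  simp only [Module.End.mul_apply, Eop_apply, Nop_apply]
  by_cases hb : b ∈ S
  · by_cases ha : a ∈ S <;> simp [ha, hb, h]
  · simp [hb]

theorem commute_Nop_Iop (h : a ≠ b) : Commute (Nop a) (Iop b) := by
  ext f S
  simp only [Module.End.mul_apply, Iop_apply, Nop_apply]
  by_cases hb : b ∈ S
  · simp [hb]
  · by_cases ha : a ∈ S <;> simp [ha, hb, h]

theorem commute_Nop_Nop (a b : Idx) : Commute (Nop a) (Nop b) := by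
  ext f S
  simp only [Module.End.mul_apply, Nop_apply]
  by_cases ha : a ∈ S <;> by_cases hb : b ∈ S <;> simp [ha, hb]

theorem key_injective : Function.Injective key := by
  decide

theorem sgn_insert {T : Finset Idx} (hb : b ∉ T) :
    sgn a (insert b T) = (if key b < key a then -1 else 1) * sgn a T := by
  unfold sgn
  rw [Finset.filter_insert]
  split_ifs with h
  · rw [Finset.card_insert_of_notMem fun hc => hb (Finset.mem_of_mem_filter _ hc), pow_succ]
    ring
  · rw [one_mul]

theorem sgn_insert_mul_sgn_insert (h : a ≠ b) {T : Finset Idx} (ha : a ∉ T) (hb : b ∉ T) :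
    sgn b (insert a T) * sgn a (insert b T) = -(sgn a T * sgn b T) := by
  have hkey : key a ≠ key b := key_injective.ne h
  rw [sgn_insert ha, sgn_insert hb]
  split_ifs <;> first | omega | ring

theorem Eop_mul_Iop_of_ne (h : a ≠ b) : Eop a * Iop b = -(Iop b * Eop a) := by
  ext f S
  simp only [Module.End.mul_apply, LinearMap.neg_apply, PiLp.neg_apply, Eop_apply, Iop_apply]
  by_cases ha : a ∈ S <;> by_cases hb : b ∈ S
  · simp [ha, hb, Ne.symm h]
  · obtain ⟨T, haT, rfl⟩ : ∃ T, a ∉ T ∧ S = insert a T :=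
      ⟨S.erase a, Finset.notMem_erase a S, (Finset.insert_erase ha).symm⟩
    have hbT : b ∉ T := fun hc => hb (Finset.mem_insert_of_mem hc)
    simp only [if_pos ha, hbT, hb, if_false, Finset.mem_insert_of_mem ha, if_true,
      Finset.erase_insert_of_ne (Ne.symm h), Finset.erase_insert haT]
    rw [← mul_assoc, ← mul_assoc, sgn_insert_mul_sgn_insert h haT hbT, neg_mul, neg_neg]
  · simp [ha, hb]
  · simp [ha, hb, h]

theorem toggle_involutive (a : Idx) :
    Function.Involutive fun S : Finset Idx => if a ∈ S then S.erase a else insert a S := by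
  intro S
  by_cases h : a ∈ S
  · simp [h, Finset.insert_erase h]
  · simp [h, Finset.erase_insert h]

theorem star_Eop (a : Idx) : star (Eop a) = Iop a := by
  rw [LinearMap.star_eq_adjoint, eq_comm, LinearMap.eq_adjoint_iff]
  intro f g
  simp only [PiLp.inner_apply, RCLike.inner_apply, conj_trivial]
  rw [← Equiv.sum_comp (toggle_involutive a).toPerm fun S => Eop a g S * f S]
  refine Finset.sum_congr rfl fun S _ => ?_
  by_cases h : a ∈ S
  · simp [h, Iop_apply, Eop_apply]
  · simp only [Function.Involutive.coe_toPerm, Iop_apply, Eop_apply, if_neg h,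
      Finset.mem_insert_self, if_true, Finset.erase_insert h]
    ring

end CanonicalAnticommutation

section Brackets

variable {a b : Idx}

theorem lie_Nop_Eop (c a : Idx) : ⁅Nop c, Eop a⁆ = if c = a then Eop a else 0 := by
  rcases eq_or_ne c a with rfl | h
  · rw [if_pos rfl, Ring.lie_def, Nop_mul_Eop_self, Eop_mul_Nop_self, sub_zero]
  · rw [if_neg h, Ring.lie_def, (commute_Nop_Eop h).eq, sub_self]

theorem lie_Eop_mul_Eop_Iop_mul_Iop (h : a ≠ b) :
    ⁅Eop a * Eop b, Iop b * Iop a⁆ = Nop a + Nop b - 1 := by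
  have hEI : Eop a * Eop b * (Iop b * Iop a) = Nop b * Nop a := by
    calc Eop a * Eop b * (Iop b * Iop a) = Eop a * (Eop b * Iop b) * Iop a := by noncomm_ring
    _ = Nop b * (Eop a * Iop a) := by
      rw [Eop_mul_Iop_self, ← (commute_Nop_Eop h.symm).eq, mul_assoc]
    _ = Nop b * Nop a := by rw [Eop_mul_Iop_self]
  have hIE : Iop b * Iop a * (Eop a * Eop b) = (1 - Nop b) - Nop a * (1 - Nop b) := by
    calc Iop b * Iop a * (Eop a * Eop b) = Iop b * (Iop a * Eop a) * Eop b := by noncomm_ring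
    _ = Iop b * Eop b - Iop b * Nop a * Eop b := by rw [Iop_mul_Eop_self]; noncomm_ring
    _ = (1 - Nop b) - Nop a * (1 - Nop b) := by
      rw [Iop_mul_Eop_self, ← (commute_Nop_Iop h).eq, mul_assoc, Iop_mul_Eop_self]
  rw [Ring.lie_def, hEI, hIE, (commute_Nop_Nop b a).eq]
  noncomm_ring

theorem commute_Eop_Iop_mul_Iop {c d : Idx} (hc : a ≠ c) (hd : a ≠ d) :
    Commute (Eop a) (Iop d * Iop c) := by
  calc Eop a * (Iop d * Iop c) = -(Iop d * (Eop a * Iop c)) := by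
        rw [← mul_assoc, Eop_mul_Iop_of_ne hd]; noncomm_ring
  _ = Iop d * Iop c * Eop a := by rw [Eop_mul_Iop_of_ne hc]; noncomm_ring

theorem lie_Eop_mul_Eop_Iop_mul_Iop_of_ne {c d : Idx} (hac : a ≠ c) (had : a ≠ d)
    (hbc : b ≠ c) (hbd : b ≠ d) : ⁅Eop a * Eop b, Iop d * Iop c⁆ = 0 := by
  rw [Ring.lie_def, sub_eq_zero]
  exact ((commute_Eop_Iop_mul_Iop hac had).mul_left (commute_Eop_Iop_mul_Iop hbc hbd)).eq

end Brackets

/-- Wedge with `v_{1p} ∧ v_{1q} + v_{2p} ∧ v_{2q}`. -/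
def Ωop (p q : Fin 3) : Module.End ℝ EW := Eop (0, p) * Eop (0, q) + Eop (1, p) * Eop (1, q)

def Ncol (p : Fin 3) : Module.End ℝ EW := Nop (0, p) + Nop (1, p)

/-- The weight of `v_{1r}` and `v_{2r}` for `ad H_j`. -/
def weight (j r : Fin 3) : ℝ := if r = j then 0 else 1

section Weights

variable {p q : Fin 3}

theorem star_Ωop : star (Ωop p q) = Iop (0, q) * Iop (0, p) + Iop (1, q) * Iop (1, p) := by
  simp only [Ωop, star_add, star_mul, star_Eop]

theorem lie_Ωop_star_Ωop (hpq : p ≠ q) :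
    ⁅Ωop p q, star (Ωop p q)⁆ = Ncol p + Ncol q - 2 := by
  rw [star_Ωop, Ωop, add_lie, lie_add, lie_add,
    lie_Eop_mul_Eop_Iop_mul_Iop (by simpa using hpq),
    lie_Eop_mul_Eop_Iop_mul_Iop (by simpa using hpq),
    lie_Eop_mul_Eop_Iop_mul_Iop_of_ne (by simp) (by simp) (by simp) (by simp),
    lie_Eop_mul_Eop_Iop_mul_Iop_of_ne (by simp) (by simp) (by simp) (by simp),
    Ncol, Ncol, show (2 : Module.End ℝ EW) = 1 + 1 from one_add_one_eq_two.symm]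
  abel

theorem exists_Lop_eq (k : Fin 3) :
    ∃ p q, p ≠ k ∧ q ≠ k ∧ p ≠ q ∧ (Lop k = Ωop p q ∨ Lop k = -Ωop p q) := by
  fin_cases k
  exacts [⟨1, 2, by decide, by decide, by decide, .inl rfl⟩,
    ⟨0, 2, by decide, by decide, by decide, .inr rfl⟩,
    ⟨0, 1, by decide, by decide, by decide, .inl rfl⟩]

theorem Λop_eq_star (k : Fin 3) : Λop k = star (Lop k) := (LinearMap.star_eq_adjoint _).symm

theorem Aop_eq_star (k : Fin 3) : Aop k = star (Vop k) := (LinearMap.star_eq_adjoint _).symm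

theorem exists_Hop_eq (k : Fin 3) :
    ∃ p q, p ≠ k ∧ q ≠ k ∧ p ≠ q ∧ Hop k = Ncol p + Ncol q - 2 := by
  obtain ⟨p, q, hp, hq, hpq, hL⟩ := exists_Lop_eq k
  refine ⟨p, q, hp, hq, hpq, ?_⟩
  rw [Hop, Λop_eq_star, ← lie_Ωop_star_Ωop hpq]
  rcases hL with hL | hL <;> rw [hL]
  rw [star_neg, neg_lie, lie_neg, neg_neg]

theorem isSelfAdjoint_Hop (k : Fin 3) : IsSelfAdjoint (Hop k) := by
  rw [Hop, Λop_eq_star, Ring.lie_def]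
  exact (IsSelfAdjoint.mul_star_self _).sub (IsSelfAdjoint.star_mul_self _)

theorem lie_Ncol_Eop (p : Fin 3) (i : Fin 2) (r : Fin 3) :
    ⁅Ncol p, Eop (i, r)⁆ = if p = r then Eop (i, r) else 0 := by
  fin_cases i <;> simp [Ncol, add_lie, lie_Nop_Eop]

theorem lie_Hop_Eop (j : Fin 3) (i : Fin 2) (r : Fin 3) :
    ⁅Hop j, Eop (i, r)⁆ = weight j r • Eop (i, r) := by
  obtain ⟨p, q, hp, hq, hpq, hH⟩ := exists_Hop_eq j
  have lie_two : ⁅(2 : Module.End ℝ EW), Eop (i, r)⁆ = 0 := by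
    rw [Ring.lie_def, two_mul, mul_two, sub_self]
  rw [hH, sub_lie, add_lie, lie_Ncol_Eop, lie_Ncol_Eop, lie_two, sub_zero, weight]
  split_ifs <;> first | omega | simp

theorem lie_Hop_Eop_mul_Eop (j : Fin 3) (a b : Idx) :
    ⁅Hop j, Eop a * Eop b⁆ = (weight j a.2 + weight j b.2) • (Eop a * Eop b) :=
  lie_mul_eq_smul_of_lie_eq_smul (lie_Hop_Eop j a.1 a.2) (lie_Hop_Eop j b.1 b.2)

theorem lie_Hop_Ωop (j : Fin 3) :
    ⁅Hop j, Ωop p q⁆ = (weight j p + weight j q) • Ωop p q := by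
  rw [Ωop, lie_add, lie_Hop_Eop_mul_Eop, lie_Hop_Eop_mul_Eop, smul_add]

theorem lie_Hop_Lop {j k : Fin 3} (hjk : j ≠ k) : ⁅Hop j, Lop k⁆ = Lop k := by
  obtain ⟨p, q, hp, hq, hpq, hL⟩ := exists_Lop_eq k
  have weight_sum : weight j p + weight j q = 1 := by
    unfold weight
    split_ifs <;> first | omega | norm_num
  rcases hL with hL | hL <;> rw [hL]
  · rw [lie_Hop_Ωop, weight_sum, one_smul]
  · rw [lie_neg, lie_Hop_Ωop, weight_sum, one_smul]

theorem lie_Hop_Vop (j k : Fin 3) : ⁅Hop j, Vop k⁆ = (weight j k + weight j k) • Vop k :=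
  lie_Hop_Eop_mul_Eop j (0, k) (1, k)

theorem lie_Hop_star (j : Fin 3) {X : Module.End ℝ EW} {c : ℝ} (h : ⁅Hop j, X⁆ = c • X) :
    ⁅Hop j, star X⁆ = -(c • star X) := by
  simpa using lie_star_eq_neg_smul_of_lie_eq_smul (isSelfAdjoint_Hop j) h

end Weights

end

/-- For `j ≠ k`: `[H_j, L_k] = L_k`, `[H_j, Λ_k] = -Λ_k`, `[H_j, V_j] = 0`,
`[H_j, A_j] = 0`, `[H_j, V_k] = 2V_k`, `[H_j, A_k] = -2A_k`. -/
theorem H_weights :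
    ∀ j k : Fin 3, j ≠ k →
      ⁅Hop j, Lop k⁆ = Lop k ∧
      ⁅Hop j, Λop k⁆ = -Λop k ∧
      ⁅Hop j, Vop j⁆ = 0 ∧
      ⁅Hop j, Aop j⁆ = 0 ∧
      ⁅Hop j, Vop k⁆ = (2 : ℝ) • Vop k ∧
      ⁅Hop j, Aop k⁆ = -((2 : ℝ) • Aop k) := by
  intro j k hjk
  have hL := lie_Hop_Lop hjk
  have hVj : ⁅Hop j, Vop j⁆ = 0 := by
    rw [lie_Hop_Vop, weight, if_pos rfl, add_zero, zero_smul]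
  have hVk : ⁅Hop j, Vop k⁆ = (2 : ℝ) • Vop k := by
    rw [lie_Hop_Vop, weight, if_neg hjk.symm, one_add_one_eq_two]
  refine ⟨hL, ?_, hVj, ?_, hVk, ?_⟩
  · rw [Λop_eq_star, lie_Hop_star j (hL.trans (one_smul ℝ _).symm), one_smul]
  · rw [Aop_eq_star, lie_Hop_star j (hVj.trans (zero_smul ℝ _).symm), zero_smul, neg_zero]
  · rw [Aop_eq_star, lie_Hop_star j hVk]
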